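/- arXiv:1812.08893 — 2 statements merged into one kernel-verified Lean document; each statement's English description precedes it below -/
import Mathlib

section
/- Assume the excision hypotheses and fix i with its coloring 𝒞_i. If Z_i is a finite complex, then the set S_i of red triangles of [0,∞)×[0,1] is finite. -/
universe u

/-! ### Combinatorial 2-complexes -/

/-- A combinatorial 2-complex: an adjacency relation (the edges of the 1-skeleton) together
with a set of 2-cells, each 2-cell being recorded by the cyclic list of vertices of its
boundary walk. -/
structure TwoComplex (V : Type u) where
  Adj : V → V → Prop
  cells : Set (List V)

namespace TwoComplex

variable {V : Type u} (X : TwoComplex V)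

/-- One step of an edge path: either stay at a vertex or move along an edge. -/
def Step (u v : V) : Prop := u = v ∨ X.Adj u v

/-- `X.WalkFromTo v w l` : `l` is an edge path (with pauses allowed) from `v` to `w`. -/
def WalkFromTo (v w : V) (l : List V) : Prop :=
  l.Chain' X.Step ∧ l.head? = some v ∧ l.getLast? = some w

/-- `w` is within distance `k` of `v` in the 1-skeleton of `X`. -/
def distLE (v w : V) (k : ℕ) : Prop :=
  ∃ l : List V, X.WalkFromTo v w l ∧ l.length ≤ k + 1

/-- The edge-path distance between two vertices (junk value `0` if not connected). -/
noncomputable def dist (v w : V) : ℕ := sInf {k | X.distLE v w k}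

/-- The ball of radius `K` about `v`: all vertices within distance `K` of `v`.  (As a set of
vertices; the corresponding subcomplex is the full subcomplex spanned by it.) -/
def ball (v : V) (K : ℕ) : Set V := {w | X.distLE v w K}

/-- The ball of integer radius `K` about `v`; empty when `K < 0`. -/
def ballZ (v : V) (K : ℤ) : Set V := {w | ∃ k : ℕ, (k : ℤ) ≤ K ∧ X.distLE v w k}

/-- An edge loop: a nonempty list `l = [v₀, …, v_m]` denoting the closed edge path
`v₀ → v₁ → ⋯ → v_m → v₀` (pauses allowed).  Its length is the length of the list. -/
def IsLoop (l : List V) : Prop :=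
  l ≠ [] ∧ l.Chain' X.Step ∧ ∀ h : l ≠ [], X.Step (l.getLast h) (l.head h)

/-- Elementary combinatorial (free) homotopy moves between edge loops inside the full
subcomplex spanned by a vertex set `A`: rotation of the starting point, insertion of a
pause, insertion of a backtrack, and insertion of the boundary of a 2-cell whose vertices
lie in `A`. -/
inductive ElemMove (A : Set V) : List V → List V → Prop
  | rotate (a : V) (l : List V) : ElemMove A (a :: l) (l ++ [a])
  | pause (l : List V) (u : V) : ElemMove A (l ++ [u]) (l ++ [u, u])
  | backtrack (l : List V) (u v : V) (h : X.Adj u v) (hv : v ∈ A) :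
      ElemMove A (l ++ [u]) (l ++ [u, v, u])
  | cell (l c' : List V) (u : V) (c : List V)
      (hc : c ∈ X.cells ∨ c.reverse ∈ X.cells)
      (hrot : c.IsRotated (u :: c'))
      (hA : ∀ x ∈ u :: c', x ∈ A) :
      ElemMove A (l ++ [u]) (l ++ [u] ++ c' ++ [u])

/-- Two edge loops are freely homotopic within the full subcomplex spanned by `A`. -/
def LoopHomotopicIn (A : Set V) (l l' : List V) : Prop :=
  Relation.EqvGen (X.ElemMove A) l l'

/-- An edge loop is null-homotopic within the full subcomplex spanned by `A`. -/
def NullHomotopicIn (A : Set V) (l : List V) : Prop :=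
  ∃ v ∈ A, X.LoopHomotopicIn A l [v]

/-- An edge-path ray (pauses allowed). -/
def IsEdgeRay (r : ℕ → V) : Prop := ∀ m, X.Step (r m) (r (m + 1))

/-- A proper edge-path ray: an edge-path ray that eventually leaves every finite set of
vertices (equivalently, every compact subcomplex). -/
def IsProperRay (r : ℕ → V) : Prop :=
  X.IsEdgeRay r ∧ ∀ A : Set V, A.Finite → ∃ N, ∀ m, N ≤ m → r m ∉ A

/-- A geodesic edge-path ray. -/
noncomputable def IsGeodesicRay (r : ℕ → V) : Prop :=
  (∀ m, X.Adj (r m) (r (m + 1))) ∧ ∀ m k, X.dist (r m) (r (m + k)) = k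

/-- A geodesic edge path from `v` to `w`. -/
noncomputable def IsGeodesicPath (v w : V) (l : List V) : Prop :=
  l.Chain' X.Adj ∧ l.head? = some v ∧ l.getLast? = some w ∧ l.length = X.dist v w + 1

/-- Carrier condition: the four corners of a grid square lie in a common closed cell
(a vertex, a closed edge or a closed 2-cell) of `X`; a cellular map of a square into `X`. -/
def SquareCarrier (a b c d : V) : Prop :=
  ({a, b, c, d} : Set V).Subsingleton ∨
    (∃ u v, X.Adj u v ∧ ({a, b, c, d} : Set V) ⊆ {u, v}) ∨
    (∃ e ∈ X.cells, ({a, b, c, d} : Set V) ⊆ {x | x ∈ e})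

/-- A proper cellular map of the grid-squared quarter plane `[0,∞) × [0,∞)` into the
subcomplex of `X` spanned by `A`: every unit square is carried by a closed cell, and the
preimage of every finite (i.e. compact) set is finite. -/
def GridMap (A : Set V) (H : ℕ × ℕ → V) : Prop :=
  (∀ i j, X.SquareCarrier (H (i, j)) (H (i + 1, j)) (H (i + 1, j + 1)) (H (i, j + 1))) ∧
    (∀ B : Set V, B.Finite → {p : ℕ × ℕ | H p ∈ B}.Finite) ∧ ∀ p, H p ∈ A

/-- Proper rays `r` and `s` emanating from a common basepoint are properly homotopic
rel the basepoint, with image in (the full subcomplex spanned by) `A`.  The quarter plane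
`[0,∞) × [0,∞)`, with `r` along the bottom and `s` along the left side, is the standard
model of a proper homotopy `[0,∞) × [0,1] → X` rel the basepoint. -/
def ProperlyHomotopicRelIn (A : Set V) (r s : ℕ → V) : Prop :=
  ∃ H : ℕ × ℕ → V, X.GridMap A H ∧ (∀ t, H (t, 0) = r t) ∧ ∀ t, H (0, t) = s t

/-- Proper rays `r`, `s` from a common basepoint are properly homotopic rel the basepoint. -/
def ProperlyHomotopicRel (r s : ℕ → V) : Prop :=
  X.ProperlyHomotopicRelIn Set.univ r s

/-- Proper rays `r` and `s` are (freely) properly homotopic: after an initial collar the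
quarter plane restricts to `r` on the bottom and `s` on the left side. -/
def ProperlyHomotopic (r s : ℕ → V) : Prop :=
  ∃ (H : ℕ × ℕ → V) (a b : ℕ), X.GridMap Set.univ H ∧
    (∀ t, H (a + t, 0) = r t) ∧ ∀ t, H (0, b + t) = s t

/-- `X` has semistable fundamental group at infinity: any two proper (edge-path) rays in `X`
are properly homotopic. -/
def SemistableAtInfty : Prop :=
  ∀ r s : ℕ → V, X.IsProperRay r → X.IsProperRay s → X.ProperlyHomotopic r s

/-- Gromov hyperbolicity of (the 1-skeleton of) `X`, with constant `δ`, via the four-point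
condition. -/
noncomputable def Hyperbolic (δ : ℕ) : Prop :=
  (∀ x y : V, ∃ k, X.distLE x y k) ∧
    ∀ x y z w : V, X.dist x y + X.dist z w ≤
      max (X.dist x z + X.dist y w) (X.dist x w + X.dist y z) + 2 * δ

end TwoComplex

/-- The concatenation of a finite edge path with an edge-path ray. -/
def appendPath {V : Type u} (β : List V) (s : ℕ → V) : ℕ → V :=
  fun m => if h : m < β.length then β.get ⟨m, h⟩ else s (m - β.length)

/-- Distance at most `k` with respect to a bare adjacency relation. -/
def relDistLE {V : Type u} (A : V → V → Prop) (v w : V) (k : ℕ) : Prop :=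
  (TwoComplex.mk A ∅).distLE v w k


/-! ### Triangulations of the half strip `[0,∞) × [0,1]` -/

/-- The half strip `[0,∞) × [0,1] ⊆ ℝ²`. -/
def halfStrip : Set (ℝ × ℝ) := {p | 0 ≤ p.1 ∧ 0 ≤ p.2 ∧ p.2 ≤ 1}

/-- A (geometric, locally finite) triangulation of the half strip: a simplicial structure
on `[0,∞) × [0,1]`. -/
structure StripTriangulation where
  tri : Set (Finset (ℝ × ℝ))
  card_eq : ∀ t ∈ tri, t.card = 3
  indep : ∀ t ∈ tri, AffineIndependent ℝ ((↑) : t → ℝ × ℝ)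
  subset_strip : ∀ t ∈ tri, convexHull ℝ (t : Set (ℝ × ℝ)) ⊆ halfStrip
  covers : halfStrip ⊆ ⋃ t ∈ tri, convexHull ℝ (t : Set (ℝ × ℝ))
  faces_meet : ∀ t ∈ tri, ∀ t' ∈ tri,
    convexHull ℝ (t : Set (ℝ × ℝ)) ∩ convexHull ℝ (t' : Set (ℝ × ℝ)) =
      convexHull ℝ ((t ∩ t' : Finset (ℝ × ℝ)) : Set (ℝ × ℝ))
  loc_finite : ∀ K : Set (ℝ × ℝ), IsCompact K →
    {t | t ∈ tri ∧ (convexHull ℝ (t : Set (ℝ × ℝ)) ∩ K).Nonempty}.Finite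

namespace StripTriangulation

variable (T : StripTriangulation)

/-- The vertices of the triangulation. -/
def vert : Set (ℝ × ℝ) := ⋃ t ∈ T.tri, (t : Set (ℝ × ℝ))

/-- `a` and `b` span an edge of the triangulation. -/
def IsEdge (a b : ℝ × ℝ) : Prop := a ≠ b ∧ ∃ t ∈ T.tri, a ∈ t ∧ b ∈ t

/-- The open cell of a simplex `c` (the relative interior of its convex hull). -/
def openCell (c : Finset (ℝ × ℝ)) : Set (ℝ × ℝ) :=
  convexHull ℝ (c : Set (ℝ × ℝ)) \
    ⋃ (b : Finset (ℝ × ℝ)) (_ : b ⊂ c), convexHull ℝ (b : Set (ℝ × ℝ))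

/-- A subset of the strip that is a union of open cells of `T`. -/
def IsCellUnion (E : Set (ℝ × ℝ)) : Prop :=
  ∃ 𝒞 : Set (Finset (ℝ × ℝ)), (∀ c ∈ 𝒞, c ≠ ∅ ∧ ∃ t ∈ T.tri, c ⊆ t) ∧
    E = ⋃ c ∈ 𝒞, openCell c

/-- A subset of the strip that is a subcomplex of the 1-skeleton of `T` (a union of closed
vertices and edges). -/
def IsEdgeUnion (B : Set (ℝ × ℝ)) : Prop :=
  ∃ 𝒟 : Set (Finset (ℝ × ℝ)), (∀ c ∈ 𝒟, c ≠ ∅ ∧ c.card ≤ 2 ∧ ∃ t ∈ T.tri, c ⊆ t) ∧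
    B = ⋃ c ∈ 𝒟, convexHull ℝ (c : Set (ℝ × ℝ))

/-- A disk pair `(E, β)` in the triangulated half strip: `E` is an open union of open
cells homeomorphic to `ℝ²`, bounded by the embedded edge-path loop or edge-path line `β`
(a subcomplex of the 1-skeleton which is the frontier of `E`, homeomorphic to a circle or
to the real line), such that `E ∪ β` is closed and homeomorphic to a closed disk or to a
closed half plane. -/
def IsDiskPair (E B : Set (ℝ × ℝ)) : Prop :=
  T.IsCellUnion E ∧ T.IsEdgeUnion B ∧ Disjoint E B ∧
    IsOpen (Subtype.val ⁻¹' E : Set halfStrip) ∧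
    IsClosed (Subtype.val ⁻¹' (E ∪ B) : Set halfStrip) ∧
    (Subtype.val ⁻¹' B : Set halfStrip) = frontier (Subtype.val ⁻¹' E : Set halfStrip) ∧
    Nonempty (E ≃ₜ (ℝ × ℝ)) ∧
    ((Nonempty (B ≃ₜ Circle) ∧
        Nonempty ((E ∪ B : Set (ℝ × ℝ)) ≃ₜ (Metric.closedBall (0 : ℝ × ℝ) 1))) ∨
      (Nonempty (B ≃ₜ ℝ) ∧
        Nonempty ((E ∪ B : Set (ℝ × ℝ)) ≃ₜ ({p : ℝ × ℝ | 0 ≤ p.2}))))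

/-- A finite (bounded) disk pair: the bounding edge path is a loop (a circle). -/
def IsFiniteDiskPair (E B : Set (ℝ × ℝ)) : Prop :=
  T.IsDiskPair E B ∧ Nonempty (B ≃ₜ Circle)

end StripTriangulation


/-! ### The excision setting: simplicial maps of the half strip into a 2-complex -/

section Excision

variable {V : Type}

/-- `Z` separates the vertex `v ∈ X − Z` from `Y`: every edge path in `X` from `v` to a
vertex of `Y` contains a vertex of `Z`. -/
def SeparatesFromY (X : TwoComplex V) (Y Z : Set V) (v : V) : Prop :=
  v ∉ Z ∧ ∀ (l : List V) (w : V), w ∈ Y → X.WalkFromTo v w l → ∃ x ∈ l, x ∈ Z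

/-- The excision hypotheses: `X` is a (connected, locally finite) 2-complex, `Y` a (full)
subcomplex, and `𝒵 = {Z i}` a collection of connected subcomplexes of `Y` such that only
finitely many `Z i` meet any compact (= finite) set of vertices, and every vertex of
`X − Y` is separated from `Y` by exactly one `Z i`. -/
structure ExcisionSetup (V : Type) where
  X : TwoComplex V
  Y : Set V
  base : V
  base_mem : base ∈ Y
  Z : ℕ → Set V
  Z_sub : ∀ i, Z i ⊆ Y
  Z_conn : ∀ i, ∀ a ∈ Z i, ∀ b ∈ Z i, ∃ l : List V,
    (TwoComplex.mk (fun u v => X.Adj u v ∧ u ∈ Z i ∧ v ∈ Z i)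
      (∅ : Set (List V))).WalkFromTo a b l
  Z_locfin : ∀ A : Set V, A.Finite → {i | (Z i ∩ A).Nonempty}.Finite
  sep_unique : ∀ v : V, v ∉ Y → ∃! i : ℕ, SeparatesFromY X Y (Z i) v

/-- Carrier condition: a subset of vertices of `X` contained in a common closed cell. -/
def InClosedCell (X : TwoComplex V) (s : Set V) : Prop :=
  s.Subsingleton ∨ (∃ u v, X.Adj u v ∧ s ⊆ {u, v}) ∨ ∃ e ∈ X.cells, s ⊆ {x | x ∈ e}

/-- A proper simplicial map `M` of a triangulated half strip into `X` which sends the two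
boundary lines into `Y` (where it restricts to the proper edge-path rays `r` and `s`) and
collapses the left edge `{0} × [0,1]` to the base vertex. -/
structure StripMap (Ex : ExcisionSetup V) where
  T : StripTriangulation
  m : ℝ × ℝ → V
  simplicial : ∀ t ∈ T.tri, InClosedCell Ex.X (m '' (t : Set (ℝ × ℝ)))
  edges : ∀ a b : ℝ × ℝ, T.IsEdge a b → Ex.X.Step (m a) (m b)
  proper : ∀ A : Set V, A.Finite → {v | v ∈ T.vert ∧ m v ∈ A}.Finite
  bdry_in_Y : ∀ v ∈ T.vert, v.2 = 0 ∨ v.2 = 1 → m v ∈ Ex.Y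
  left_base : ∀ v ∈ T.vert, v.1 = 0 → m v = Ex.base

variable (Ex : ExcisionSetup V)

/-- The coloring `𝒞 i` of the vertices of `X`: blue vertices. -/
def BlueV (i : ℕ) (x : V) : Prop := x ∈ Ex.Z i

/-- Red vertices for the coloring `𝒞 i`. -/
def RedV (i : ℕ) (x : V) : Prop := x ∉ Ex.Y ∧ SeparatesFromY Ex.X Ex.Y (Ex.Z i) x

/-- Green vertices for the coloring `𝒞 i`. -/
def GreenV (i : ℕ) (x : V) : Prop := ¬ BlueV Ex i x ∧ ¬ RedV Ex i x

/-- `S i`: the red triangles of the strip under the coloring pulled back along `M`. -/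
def RedTri (M : StripMap Ex) (i : ℕ) : Set (Finset (ℝ × ℝ)) :=
  {t | t ∈ M.T.tri ∧ ∃ v ∈ t, RedV Ex i (M.m v)}

/-- Two red triangles share a red edge. -/
def ShareRedEdge (M : StripMap Ex) (i : ℕ) (t t' : Finset (ℝ × ℝ)) : Prop :=
  t ∈ RedTri Ex M i ∧ t' ∈ RedTri Ex M i ∧ t ≠ t' ∧
    ∃ a b : ℝ × ℝ, a ≠ b ∧ a ∈ t ∧ b ∈ t ∧ a ∈ t' ∧ b ∈ t' ∧
      (RedV Ex i (M.m a) ∨ RedV Ex i (M.m b))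

/-- The equivalence class `T i (△)` of a red triangle: triangles joined to it by a chain
of triangles in which consecutive triangles share a red edge. -/
def TriClass (M : StripMap Ex) (i : ℕ) (t : Finset (ℝ × ℝ)) : Set (Finset (ℝ × ℝ)) :=
  {t' | Relation.ReflTransGen (ShareRedEdge Ex M i) t t'}

/-- The conclusion of the partition lemma for the triangle `△ ∈ S i`: the properties of
the disk pair `(E, B)` produced there.  (i) every vertex of `B` maps into `Z i` and every
edge of `B` lies on exactly one triangle of `T i (△)`; (ii) `△` lies in `E` and `E` is
saturated under all the equivalence relations; (iii) if `Z i` is finite the disk pair is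
finite; (iv) `B` separates `E` from `[0,∞) × {0,1}`. -/
def PartitionDiskPair (M : StripMap Ex) (i : ℕ) (tri0 : Finset (ℝ × ℝ))
    (E B : Set (ℝ × ℝ)) : Prop :=
  M.T.IsDiskPair E B ∧
  -- (i)
  (∀ v ∈ M.T.vert, v ∈ B → M.m v ∈ Ex.Z i) ∧
  (∀ a b : ℝ × ℝ, M.T.IsEdge a b → segment ℝ a b ⊆ B →
    ∃! t : Finset (ℝ × ℝ), t ∈ TriClass Ex M i tri0 ∧ a ∈ t ∧ b ∈ t) ∧
  -- (ii)
  StripTriangulation.openCell tri0 ⊆ E ∧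
  (∀ (j : ℕ) (t' : Finset (ℝ × ℝ)), t' ∈ RedTri Ex M j → StripTriangulation.openCell t' ⊆ E →
    ∀ t'' ∈ TriClass Ex M j t', StripTriangulation.openCell t'' ⊆ E) ∧
  -- (iii)
  ((Ex.Z i).Finite → Nonempty (B ≃ₜ Circle)) ∧
  -- (iv)
  (∀ p ∈ E ∩ M.T.vert, ∀ γ : unitInterval → ℝ × ℝ, Continuous γ →
    (∀ u, γ u ∈ halfStrip) → γ 0 = p → ((γ 1).2 = 0 ∨ (γ 1).2 = 1) → ∃ u, γ u ∈ B)

end Excision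


/-! ### Auxiliary lemmas for the proof -/

private lemma isLinearMap_fst' : IsLinearMap ℝ (Prod.fst : ℝ × ℝ → ℝ) :=
  ⟨fun _ _ => rfl, fun _ _ => rfl⟩

private lemma isLinearMap_snd' : IsLinearMap ℝ (Prod.snd : ℝ × ℝ → ℝ) :=
  ⟨fun _ _ => rfl, fun _ _ => rfl⟩

private lemma walk_snoc' {V : Type} (X : TwoComplex V) {v w u : V} {l : List V}
    (h : X.WalkFromTo v w l) (hs : X.Step w u) : X.WalkFromTo v u (l ++ [u]) := by
  obtain ⟨hc, hh, hl⟩ := h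
  cases l with
  | nil => simp at hh
  | cons a l' =>
    refine ⟨?_, ?_, ?_⟩
    · refine List.IsChain.append hc (List.isChain_singleton u) ?_
      intro x hx y hy
      simp only [List.head?_cons, Option.mem_def, Option.some.injEq] at hy
      rw [Option.mem_def, hl] at hx
      injection hx with hx
      subst hx; subst hy; exact hs
    · simpa using hh
    · exact List.getLast?_concat

private lemma walk_pair' {V : Type} (X : TwoComplex V) {v w : V}
    (hs : X.Step v w) : X.WalkFromTo v w [v, w] := by
  refine ⟨List.isChain_pair.2 hs, rfl, rfl⟩

/-! ### Statement 15 -/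

/-- **Lemma.**  Under the excision hypotheses, fix `i` with its coloring `𝒞 i`.  If `Z i`
is a finite complex, then the set `S i` of red triangles of the half strip is finite. -/
theorem red_triangles_finite {V : Type} (Ex : ExcisionSetup V) (M : StripMap Ex)
    (i : ℕ) (hfin : (Ex.Z i).Finite) : (RedTri Ex M i).Finite := by
  classical
  -- strip vertices mapping into `Z i`
  have hW : {v | v ∈ M.T.vert ∧ M.m v ∈ Ex.Z i}.Finite := M.proper _ hfin
  -- triangles containing such a vertex
  set Bad : Set (Finset (ℝ × ℝ)) := {t | t ∈ M.T.tri ∧ ∃ w ∈ t, M.m w ∈ Ex.Z i} with hBaddef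
  have hBadfin : Bad.Finite := by
    refine Set.Finite.subset (Set.Finite.biUnion hW (fun w _ =>
      M.T.loc_finite {w} isCompact_singleton)) ?_
    rintro t ⟨htri, w, hw, hmw⟩
    have hwv : w ∈ M.T.vert := Set.mem_biUnion htri hw
    exact Set.mem_biUnion (⟨hwv, hmw⟩ : w ∈ {v | v ∈ M.T.vert ∧ M.m v ∈ Ex.Z i})
      ⟨htri, w, subset_convexHull ℝ _ hw, rfl⟩
  have hVfin : (⋃ t ∈ Bad, (t : Set (ℝ × ℝ))).Finite :=
    hBadfin.biUnion (fun t _ => t.finite_toSet)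
  obtain ⟨R, hR⟩ : ∃ R : ℝ, ∀ t ∈ Bad, ∀ w ∈ t, (w : ℝ × ℝ).1 ≤ R := by
    obtain ⟨R, hR⟩ := (hVfin.image Prod.fst).bddAbove
    exact ⟨R, fun t ht w hw => hR (Set.mem_image_of_mem _ (Set.mem_biUnion ht hw))⟩
  -- convexity of the half strip
  have hconvHS : Convex ℝ halfStrip := by
    have heq : halfStrip =
        ({p : ℝ × ℝ | 0 ≤ p.1} ∩ {p : ℝ × ℝ | 0 ≤ p.2}) ∩ {p : ℝ × ℝ | p.2 ≤ 1} := by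
      ext p; simp [halfStrip, and_assoc]
    rw [heq]
    exact ((convex_halfSpace_ge isLinearMap_fst' 0).inter
      (convex_halfSpace_ge isLinearMap_snd' 0)).inter (convex_halfSpace_le isLinearMap_snd' 1)
  -- a step of `X` between the images of two vertices of a common triangle
  have stepIn : ∀ t ∈ M.T.tri, ∀ a ∈ t, ∀ b ∈ t, Ex.X.Step (M.m a) (M.m b) := by
    intro t ht a ha b hb
    by_cases hab : a = b
    · exact Or.inl (by rw [hab])
    · exact M.edges a b ⟨hab, t, ht, ha, hb⟩
  -- key step: every vertex of the strip with red image has first coordinate ≤ R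
  have key : ∀ v ∈ M.T.vert, RedV Ex i (M.m v) → v.1 ≤ R := by
    intro v hvert hred
    by_contra hgt
    push_neg at hgt
    obtain ⟨t0, ht0, hvt0⟩ : ∃ t0 ∈ M.T.tri, v ∈ t0 := by
      simpa [StripTriangulation.vert] using hvert
    have hvstrip : v ∈ halfStrip := M.T.subset_strip t0 ht0 (subset_convexHull ℝ _ hvt0)
    set ptop : ℝ × ℝ := (v.1, 1) with hptopdef
    have hptop : ptop ∈ halfStrip := ⟨hvstrip.1, zero_le_one, le_refl 1⟩
    set S : Set (ℝ × ℝ) := segment ℝ v ptop with hSdef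
    have hScomp : IsCompact S := by
      rw [hSdef, ← convexHull_pair]
      exact Set.Finite.isCompact_convexHull ℝ ((Set.finite_singleton ptop).insert v)
    have hSsub : S ⊆ halfStrip := hconvHS.segment_subset hvstrip hptop
    have hvS : v ∈ S := left_mem_segment ℝ v ptop
    have hptopS : ptop ∈ S := right_mem_segment ℝ v ptop
    have hSfst : ∀ p ∈ S, p.1 = v.1 := by
      have hconv : Convex ℝ {p : ℝ × ℝ | p.1 = v.1} := convex_hyperplane isLinearMap_fst' v.1
      intro p hp
      exact hconv.segment_subset (by exact rfl) (by exact rfl) hp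
    set F : Set (Finset (ℝ × ℝ)) :=
      {t | t ∈ M.T.tri ∧ (convexHull ℝ (↑t : Set (ℝ × ℝ)) ∩ S).Nonempty} with hFdef
    have hFfin : F.Finite := M.T.loc_finite S hScomp
    -- triangles of F avoid Z i
    have hFgood : ∀ t ∈ F, ∀ w ∈ t, M.m w ∉ Ex.Z i := by
      rintro t ⟨htri, p, hp, hpS⟩ w hw hmw
      have hbad : t ∈ Bad := ⟨htri, w, hw, hmw⟩
      have hhalf : convexHull ℝ (↑t : Set (ℝ × ℝ)) ⊆ {q : ℝ × ℝ | q.1 ≤ R} :=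
        convexHull_min (fun w' hw' => hR t hbad w' hw') (convex_halfSpace_le isLinearMap_fst' R)
      have h1 : p.1 ≤ R := hhalf hp
      rw [hSfst p hpS] at h1
      exact absurd h1 (not_le.2 hgt)
    have hcov : ∀ p ∈ S, ∃ t ∈ F, p ∈ convexHull ℝ (↑t : Set (ℝ × ℝ)) := by
      intro p hp
      obtain ⟨t, ht, hpt⟩ := Set.mem_iUnion₂.1 (M.T.covers (hSsub hp))
      exact ⟨t, ⟨ht, p, hpt, hp⟩, hpt⟩
    set Rel : Finset (ℝ × ℝ) → Finset (ℝ × ℝ) → Prop := fun t t' =>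
      t' ∈ F ∧ (convexHull ℝ (↑t : Set (ℝ × ℝ)) ∩ convexHull ℝ (↑t' : Set (ℝ × ℝ))).Nonempty
      with hReldef
    have ht0F : t0 ∈ F := ⟨ht0, v, subset_convexHull ℝ _ hvt0, hvS⟩
    -- chain connectivity along the segment S
    have hreach : ∀ t ∈ F, ∀ p ∈ S, p ∈ convexHull ℝ (↑t : Set (ℝ × ℝ)) →
        Relation.ReflTransGen Rel t0 t := by
      intro t htF p hpS hpt
      by_contra hnr
      set C : Set (ℝ × ℝ) := ⋃ s ∈ {s | s ∈ F ∧ Relation.ReflTransGen Rel t0 s},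
        convexHull ℝ (↑s : Set (ℝ × ℝ)) with hCdef
      set D : Set (ℝ × ℝ) := ⋃ s ∈ {s | s ∈ F ∧ ¬ Relation.ReflTransGen Rel t0 s},
        convexHull ℝ (↑s : Set (ℝ × ℝ)) with hDdef
      have hCcl : IsClosed C :=
        Set.Finite.isClosed_biUnion (hFfin.subset (fun s hs => hs.1))
          (fun s _ => (Set.Finite.isClosed_convexHull ℝ s.finite_toSet))
      have hDcl : IsClosed D :=
        Set.Finite.isClosed_biUnion (hFfin.subset (fun s hs => hs.1))
          (fun s _ => (Set.Finite.isClosed_convexHull ℝ s.finite_toSet))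
      have hScover : S ⊆ C ∪ D := by
        intro q hq
        obtain ⟨s, hsF, hqs⟩ := hcov q hq
        by_cases hr : Relation.ReflTransGen Rel t0 s
        · exact Or.inl (Set.mem_biUnion ⟨hsF, hr⟩ hqs)
        · exact Or.inr (Set.mem_biUnion ⟨hsF, hr⟩ hqs)
      have hSC : (S ∩ C).Nonempty :=
        ⟨v, hvS, Set.mem_biUnion ⟨ht0F, Relation.ReflTransGen.refl⟩
          (subset_convexHull ℝ _ hvt0)⟩
      have hSD : (S ∩ D).Nonempty := ⟨p, hpS, Set.mem_biUnion ⟨htF, hnr⟩ hpt⟩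
      have hpre : IsPreconnected S := (convex_segment v ptop).isPreconnected
      obtain ⟨q, hqS, hqC, hqD⟩ := isPreconnected_closed_iff.1 hpre C D hCcl hDcl hScover hSC hSD
      obtain ⟨s1, hs1, hqs1⟩ := Set.mem_iUnion₂.1 hqC
      obtain ⟨s2, hs2, hqs2⟩ := Set.mem_iUnion₂.1 hqD
      exact hs2.2 (hs1.2.tail ⟨hs2.1, q, hqs1, hqs2⟩)
    -- building walks in X avoiding Z i
    have hvnZ : M.m v ∉ Ex.Z i := hred.2.1
    have hwalk : ∀ t, Relation.ReflTransGen Rel t0 t → t ∈ F ∧ ∀ w ∈ t,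
        ∃ l, Ex.X.WalkFromTo (M.m v) (M.m w) l ∧ ∀ x ∈ l, x ∉ Ex.Z i := by
      intro t h
      induction h with
      | refl =>
        refine ⟨ht0F, fun w hw => ?_⟩
        refine ⟨[M.m v, M.m w], walk_pair' Ex.X (stepIn t0 ht0 v hvt0 w hw), ?_⟩
        intro x hx
        simp only [List.mem_cons, List.not_mem_nil, or_false] at hx
        rcases hx with rfl | rfl
        · exact hvnZ
        · exact hFgood t0 ht0F w hw
      | @tail b c hab hrel ih =>
        obtain ⟨hcF, q, hqb, hqc⟩ := hrel
        have hbF := ih.1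
        have hmeet := M.T.faces_meet b hbF.1 c hcF.1
        have hqbc : q ∈ convexHull ℝ ((b ∩ c : Finset (ℝ × ℝ)) : Set (ℝ × ℝ)) := by
          rw [← hmeet]; exact ⟨hqb, hqc⟩
        have hne : ((b ∩ c : Finset (ℝ × ℝ)) : Set (ℝ × ℝ)).Nonempty := by
          by_contra hemp
          rw [Set.not_nonempty_iff_eq_empty] at hemp
          rw [hemp, convexHull_empty] at hqbc
          exact hqbc
        obtain ⟨c0, hc0⟩ := hne
        have hc0b : c0 ∈ b := (Finset.mem_inter.1 hc0).1
        have hc0c : c0 ∈ c := (Finset.mem_inter.1 hc0).2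
        refine ⟨hcF, fun w hw => ?_⟩
        obtain ⟨l, hl, havoid⟩ := ih.2 c0 hc0b
        refine ⟨l ++ [M.m w], walk_snoc' Ex.X hl (stepIn c hcF.1 c0 hc0c w hw), ?_⟩
        intro x hx
        rcases List.mem_append.1 hx with hx | hx
        · exact havoid x hx
        · simp at hx; subst hx; exact hFgood c hcF w hw
    -- the top vertex
    obtain ⟨tN, htNF, hptophull⟩ := hcov ptop hptopS
    have hreachN := hreach tN htNF ptop hptopS hptophull
    have htNtri : tN ∈ M.T.tri := htNF.1
    have htNne : tN.Nonempty := Finset.card_pos.1 (by rw [M.T.card_eq tN htNtri]; norm_num)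
    obtain ⟨w, hwmem, hwmax⟩ := tN.exists_max_image (fun p => p.2) htNne
    have hhull_le : convexHull ℝ (↑tN : Set (ℝ × ℝ)) ⊆ {q : ℝ × ℝ | q.2 ≤ w.2} :=
      convexHull_min (fun x hx => hwmax x hx) (convex_halfSpace_le isLinearMap_snd' _)
    have h1le : (1 : ℝ) ≤ w.2 := hhull_le hptophull
    have hwstrip : w ∈ halfStrip := M.T.subset_strip tN htNtri (subset_convexHull ℝ _ hwmem)
    have hw2 : w.2 = 1 := le_antisymm hwstrip.2.2 h1le
    have hwvert : w ∈ M.T.vert := Set.mem_biUnion htNtri hwmem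
    have hwY : M.m w ∈ Ex.Y := M.bdry_in_Y w hwvert (Or.inr hw2)
    obtain ⟨l, hl, havoid⟩ := (hwalk tN hreachN).2 w hwmem
    obtain ⟨x, hxl, hxZ⟩ := hred.2.2 l (M.m w) hwY hl
    exact havoid x hxl hxZ
  -- conclude: all red triangles meet a fixed compact set
  have hK : IsCompact (Set.Icc ((0 : ℝ), (0 : ℝ)) (R, 1)) := isCompact_Icc
  refine Set.Finite.subset (M.T.loc_finite _ hK) ?_
  rintro t ⟨htt, v, hv, hred⟩
  have hvert : v ∈ M.T.vert := Set.mem_biUnion htt hv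
  have hhs : v ∈ halfStrip := M.T.subset_strip t htt (subset_convexHull ℝ _ hv)
  refine ⟨htt, v, subset_convexHull ℝ _ hv, ?_⟩
  rw [Set.mem_Icc]
  exact ⟨⟨hhs.1, hhs.2.1⟩, ⟨key v hvert hred, hhs.2.2⟩⟩
end

section
/- Assume the excision hypotheses and let {(E_j, α_j)}_{j∈J} be disk pairs as in the conclusion of the excision theorem (E_j pairwise disjoint, M(α_j) ⊆ Z_{i(j)}, M([0,∞)×[0,1] − ⋃ E_j) ⊆ Y). Then: (a) every edge of [0,∞)×[0,1] is an edge of α_j for at most two indices j ∈ J, so only finitely many α_j have an edge in any finite subcomplex of [0,∞)×[0,1]; and (b) if Z_i ∈ 𝒵 is a finite subcomplex of X, then every α_j that M maps into Z_i is an edge-path loop (its E_j is bounded), and M maps only finitely many of the α_j into Z_i. -/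
universe u

/-! ### Auxiliary geometry lemmas -/

section Aux

open Finset in
/-- Uniqueness of barycentric coordinates w.r.t. an affinely independent finset. -/
theorem weights_eq {t : Finset (ℝ × ℝ)} (ht : AffineIndependent ℝ ((↑) : t → ℝ × ℝ))
    {w₁ w₂ : ℝ × ℝ → ℝ} (h1 : ∑ y ∈ t, w₁ y = 1) (h2 : ∑ y ∈ t, w₂ y = 1)
    (hq : ∑ y ∈ t, w₁ y • y = ∑ y ∈ t, w₂ y • y) : ∀ y ∈ t, w₁ y = w₂ y := by
  classical
  have hs1 : ∑ x ∈ t.attach, w₁ (x : ℝ × ℝ) = 1 := by rw [t.sum_attach (fun y => w₁ y)]; exact h1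
  have hs2 : ∑ x ∈ t.attach, w₂ (x : ℝ × ℝ) = 1 := by rw [t.sum_attach (fun y => w₂ y)]; exact h2
  have hcomb : t.attach.affineCombination ℝ (fun x : t => (x : ℝ × ℝ)) (fun x => w₁ x)
      = t.attach.affineCombination ℝ (fun x : t => (x : ℝ × ℝ)) (fun x => w₂ x) := by
    rw [affineCombination_eq_centerMass hs1, affineCombination_eq_centerMass hs2,
      Finset.centerMass_eq_of_sum_1 _ _ hs1, Finset.centerMass_eq_of_sum_1 _ _ hs2]
    rw [t.sum_attach (fun y => w₁ y • y), t.sum_attach (fun y => w₂ y • y)]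
    exact hq
  have := ht.indicator_eq_of_affineCombination_eq t.attach t.attach _ _ hs1 hs2 hcomb
  intro y hy
  have h := congrFun this ⟨y, hy⟩
  simpa [Set.indicator_of_mem, Finset.mem_attach] using h

end Aux

section Aux2

open StripTriangulation

/-- A point written with strictly positive weights on `c ⊆ t` lies in the open cell of `c`. -/
theorem mem_openCell_of_pos_weights {t c : Finset (ℝ × ℝ)}
    (ht : AffineIndependent ℝ ((↑) : t → ℝ × ℝ)) (hct : c ⊆ t) {w : ℝ × ℝ → ℝ}
    (hpos : ∀ y ∈ c, 0 < w y) (hsum : ∑ y ∈ c, w y = 1) :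
    (∑ y ∈ c, w y • y) ∈ openCell c := by
  classical
  set q := ∑ y ∈ c, w y • y with hqdef
  constructor
  · rw [Finset.mem_convexHull']
    exact ⟨w, fun y hy => (hpos y hy).le, hsum, rfl⟩
  · simp only [Set.mem_iUnion, not_exists]
    rintro b hb hqb
    rw [Finset.mem_convexHull'] at hqb
    obtain ⟨u, hu0, husum, huq⟩ := hqb
    -- extend both to t
    set w' : ℝ × ℝ → ℝ := fun y => if y ∈ c then w y else 0 with hw'
    set u' : ℝ × ℝ → ℝ := fun y => if y ∈ b then u y else 0 with hu'
    have hbt : b ⊆ t := (hb.subset).trans hct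
    have hsw' : ∑ y ∈ t, w' y = 1 := by
      rw [← Finset.sum_subset hct (fun x _ hx => by simp [hw', hx])]
      rw [← hsum]; exact Finset.sum_congr rfl fun x hx => by simp [hw', hx]
    have hsu' : ∑ y ∈ t, u' y = 1 := by
      rw [← Finset.sum_subset hbt (fun x _ hx => by simp [hu', hx])]
      rw [← husum]; exact Finset.sum_congr rfl fun x hx => by simp [hu', hx]
    have hqw' : ∑ y ∈ t, w' y • y = q := by
      rw [← Finset.sum_subset hct (fun x _ hx => by simp [hw', hx])]
      rw [hqdef]; exact Finset.sum_congr rfl fun x hx => by simp [hw', hx]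
    have hqu' : ∑ y ∈ t, u' y • y = q := by
      rw [← Finset.sum_subset hbt (fun x _ hx => by simp [hu', hx])]
      rw [← huq]; exact Finset.sum_congr rfl fun x hx => by simp [hu', hx]
    obtain ⟨x, hxc, hxb⟩ := Finset.exists_of_ssubset hb
    have := weights_eq ht hsw' hsu' (hqw'.trans hqu'.symm) x (hct hxc)
    rw [hw', hu'] at this
    simp only [hxc, if_true, hxb, if_false] at this
    exact absurd this (ne_of_gt (hpos x hxc))

/-- If `q` is in the open cell of a face `c` of `t` and in the hull of a face `s` of `t`,
then `c ⊆ s`. -/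
theorem face_subset_of_mem_openCell {t c s : Finset (ℝ × ℝ)}
    (ht : AffineIndependent ℝ ((↑) : t → ℝ × ℝ)) (hct : c ⊆ t) (hst : s ⊆ t) {q : ℝ × ℝ}
    (hq : q ∈ openCell c) (hqs : q ∈ convexHull ℝ (s : Set (ℝ × ℝ))) : c ⊆ s := by
  classical
  obtain ⟨hqc, hqnot⟩ := hq
  rw [Finset.mem_convexHull'] at hqc hqs
  obtain ⟨w, hw0, hwsum, hwq⟩ := hqc
  obtain ⟨u, hu0, husum, huq⟩ := hqs
  simp only [Set.mem_iUnion, not_exists] at hqnot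
  -- all weights of w on c are nonzero
  have hwpos : ∀ x ∈ c, w x ≠ 0 := by
    intro x hxc hx0
    refine hqnot (c.erase x) (Finset.erase_ssubset hxc) ?_
    rw [Finset.mem_convexHull']
    refine ⟨w, fun y hy => hw0 y (Finset.erase_subset x c hy), ?_, ?_⟩
    · rw [Finset.sum_erase _ (by rw [hx0])]; exact hwsum
    · rw [Finset.sum_erase _ (by rw [hx0, zero_smul])]; exact hwq
  -- extend to t and compare
  set w' : ℝ × ℝ → ℝ := fun y => if y ∈ c then w y else 0 with hw'
  set u' : ℝ × ℝ → ℝ := fun y => if y ∈ s then u y else 0 with hu'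
  have hsw' : ∑ y ∈ t, w' y = 1 := by
    rw [← Finset.sum_subset hct (fun x _ hx => by simp [hw', hx])]
    rw [← hwsum]; exact Finset.sum_congr rfl fun x hx => by simp [hw', hx]
  have hsu' : ∑ y ∈ t, u' y = 1 := by
    rw [← Finset.sum_subset hst (fun x _ hx => by simp [hu', hx])]
    rw [← husum]; exact Finset.sum_congr rfl fun x hx => by simp [hu', hx]
  have hqw' : ∑ y ∈ t, w' y • y = q := by
    rw [← Finset.sum_subset hct (fun x _ hx => by simp [hw', hx])]
    rw [← hwq]; exact Finset.sum_congr rfl fun x hx => by simp [hw', hx]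
  have hqu' : ∑ y ∈ t, u' y • y = q := by
    rw [← Finset.sum_subset hst (fun x _ hx => by simp [hu', hx])]
    rw [← huq]; exact Finset.sum_congr rfl fun x hx => by simp [hu', hx]
  intro x hxc
  by_contra hxs
  have := weights_eq ht hsw' hsu' (hqw'.trans hqu'.symm) x (hct hxc)
  rw [hw', hu'] at this
  simp only [hxc, if_true, hxs, if_false] at this
  exact hwpos x hxc this

end Aux2

section Aux3

open StripTriangulation

variable (T : StripTriangulation)

/-- Open cells of faces of triangles of `T` are pairwise disjoint (equal cells excepted). -/
theorem openCell_eq_of_mem {t t' c c' : Finset (ℝ × ℝ)} (htT : t ∈ T.tri) (ht'T : t' ∈ T.tri)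
    (hct : c ⊆ t) (hc't' : c' ⊆ t') {q : ℝ × ℝ}
    (hq : q ∈ openCell c) (hq' : q ∈ openCell c') : c = c' := by
  have hqc : q ∈ convexHull ℝ (c : Set (ℝ × ℝ)) := hq.1
  have hqc' : q ∈ convexHull ℝ (c' : Set (ℝ × ℝ)) := hq'.1
  have hqt : q ∈ convexHull ℝ (t : Set (ℝ × ℝ)) := convexHull_mono (by exact_mod_cast hct) hqc
  have hqt' : q ∈ convexHull ℝ (t' : Set (ℝ × ℝ)) := convexHull_mono (by exact_mod_cast hc't') hqc'
  have hmeet := T.faces_meet t htT t' ht'T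
  have hqi : q ∈ convexHull ℝ ((t ∩ t' : Finset (ℝ × ℝ)) : Set (ℝ × ℝ)) := by
    rw [← hmeet]; exact ⟨hqt, hqt'⟩
  have hcsub : c ⊆ t ∩ t' :=
    face_subset_of_mem_openCell (T.indep t htT) hct (Finset.inter_subset_left) hq hqi
  have hc'sub : c' ⊆ c := by
    refine face_subset_of_mem_openCell (T.indep t' ht'T) hc't'
      (hcsub.trans Finset.inter_subset_right) hq' hqc
  have hcsub' : c ⊆ c' := by
    refine face_subset_of_mem_openCell (T.indep t htT) hct (hc'sub.trans hct) hq hqc'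
  exact le_antisymm hcsub' hc'sub

/-- A cell union which meets the open cell of a face contains that whole open cell. -/
theorem openCell_subset_of_cellUnion {E : Set (ℝ × ℝ)} (hE : T.IsCellUnion E)
    {d t' : Finset (ℝ × ℝ)} (ht' : t' ∈ T.tri) (hdt' : d ⊆ t') {q : ℝ × ℝ}
    (hq : q ∈ openCell d) (hqE : q ∈ E) : openCell d ⊆ E := by
  obtain ⟨𝒞, h𝒞, rfl⟩ := hE
  simp only [Set.mem_iUnion] at hqE
  obtain ⟨c, hc𝒞, hqc⟩ := hqE
  obtain ⟨-, t, htT, hct⟩ := h𝒞 c hc𝒞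
  have : c = d := openCell_eq_of_mem T htT ht' hct hdt' hqc hq
  subst this
  exact Set.subset_biUnion_of_mem hc𝒞

end Aux3

section Aux4

open StripTriangulation

/-- Cross product of two vectors in the plane. -/
def cross2 (u v : ℝ × ℝ) : ℝ := u.1 * v.2 - u.2 * v.1

theorem cross2_eq_zero {u v : ℝ × ℝ} (hu : u ≠ 0) (h : cross2 u v = 0) : ∃ s : ℝ, v = s • u := by
  have hu' : u.1 ≠ 0 ∨ u.2 ≠ 0 := by
    by_contra hcon
    push_neg at hcon
    exact hu (Prod.ext hcon.1 hcon.2)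
  rcases hu' with h1 | h2
  · refine ⟨v.1 / u.1, Prod.ext ?_ ?_⟩
    · simp [Prod.smul_def]; field_simp
    · simp only [Prod.smul_def, smul_eq_mul]
      rw [cross2, sub_eq_zero] at h
      field_simp
      linarith [h]
  · refine ⟨v.2 / u.2, Prod.ext ?_ ?_⟩
    · simp only [Prod.smul_def, smul_eq_mul]
      rw [cross2, sub_eq_zero] at h
      field_simp
      linarith [h]
    · simp [Prod.smul_def]; field_simp

/-- In an affinely independent finset, a third vertex is not on the line of an edge. -/
theorem cross2_ne_zero_of_indep {t : Finset (ℝ × ℝ)}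
    (ht : AffineIndependent ℝ ((↑) : t → ℝ × ℝ)) {a b x : ℝ × ℝ}
    (ha : a ∈ t) (hb : b ∈ t) (hx : x ∈ t) (hab : a ≠ b) (hxa : x ≠ a) (hxb : x ≠ b) :
    cross2 (b - a) (x - a) ≠ 0 := by
  classical
  intro h
  obtain ⟨s, hs⟩ := cross2_eq_zero (sub_ne_zero.2 (Ne.symm hab)) h
  set w₁ : ℝ × ℝ → ℝ := fun y => if y = x then 1 else 0 with hw₁
  set w₂ : ℝ × ℝ → ℝ := fun y => if y = a then 1 - s else if y = b then s else 0 with hw₂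
  have habs : ({a, b} : Finset (ℝ × ℝ)) ⊆ t := by
    intro y hy; simp only [Finset.mem_insert, Finset.mem_singleton] at hy
    rcases hy with rfl | rfl <;> assumption
  have h1 : ∑ y ∈ t, w₁ y = 1 := by
    rw [hw₁, Finset.sum_ite_eq' t x (fun _ => (1:ℝ))]; simp [hx]
  have h2 : ∑ y ∈ t, w₂ y = 1 := by
    rw [← Finset.sum_subset habs (fun y _ hy => ?_)]
    · rw [Finset.sum_pair hab]; simp [hw₂, hab, Ne.symm hab]
    · simp only [Finset.mem_insert, Finset.mem_singleton, not_or] at hy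
      simp [hw₂, hy.1, hy.2]
  have hq : ∑ y ∈ t, w₁ y • y = ∑ y ∈ t, w₂ y • y := by
    have l1 : ∑ y ∈ t, w₁ y • y = x := by
      rw [hw₁]
      rw [show (fun y => (if y = x then (1:ℝ) else 0) • y) = fun y => if y = x then x else 0 by
        funext y; by_cases hyx : y = x <;> simp [hyx]]
      rw [Finset.sum_ite_eq' t x (fun _ => x)]; simp [hx]
    have l2 : ∑ y ∈ t, w₂ y • y = (1 - s) • a + s • b := by
      rw [← Finset.sum_subset habs (fun y _ hy => ?_)]
      · rw [Finset.sum_pair hab]; simp [hw₂, hab, Ne.symm hab]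
      · simp only [Finset.mem_insert, Finset.mem_singleton, not_or] at hy
        simp [hw₂, hy.1, hy.2]
    rw [l1, l2]
    have : x - a = s • (b - a) := hs
    have hx' : x = a + s • (b - a) := by
      rw [← this]; abel
    rw [hx', smul_sub]; module
  have := weights_eq ht h1 h2 hq x hx
  rw [hw₁, hw₂] at this
  simp [hxa, hxb] at this

end Aux4

section Aux5

open StripTriangulation

/-- Helper: sum of a 3-point weight function over `{a,b,c}`. -/
theorem triple_sum {a b c : ℝ × ℝ} (hab : a ≠ b) (hca : c ≠ a) (hcb : c ≠ b)
    (wa wb wc : ℝ) (f : ℝ × ℝ → ℝ)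
    (hf : f = fun y => if y = a then wa else if y = b then wb else wc) :
    (∑ y ∈ ({a, b, c} : Finset (ℝ × ℝ)), f y = wa + wb + wc) ∧
      (∑ y ∈ ({a, b, c} : Finset (ℝ × ℝ)), f y • y = wa • a + wb • b + wc • c) := by
  classical
  have hanb : a ∉ ({b, c} : Finset (ℝ × ℝ)) := by simp [hab, Ne.symm hca]
  have hbnc : b ∉ ({c} : Finset (ℝ × ℝ)) := by simp [Ne.symm hcb]
  constructor
  · rw [show ({a,b,c} : Finset (ℝ × ℝ)) = insert a {b, c} from rfl, Finset.sum_insert hanb,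
      show ({b,c} : Finset (ℝ × ℝ)) = insert b {c} from rfl, Finset.sum_insert hbnc,
      Finset.sum_singleton, hf]
    simp [hab, Ne.symm hab, hca, hcb]
    ring
  · rw [show ({a,b,c} : Finset (ℝ × ℝ)) = insert a {b, c} from rfl, Finset.sum_insert hanb,
      show ({b,c} : Finset (ℝ × ℝ)) = insert b {c} from rfl, Finset.sum_insert hbnc,
      Finset.sum_singleton, hf]
    simp [hab, Ne.symm hab, hca, hcb]
    abel

/-- Two triangles sharing the edge `ab`, with third vertices on the same side of the line
through `a` and `b`, have overlapping open (2-)cells. -/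
theorem same_side_overlap {a b c c' : ℝ × ℝ} (hab : a ≠ b)
    (ht : AffineIndependent ℝ ((↑) : ({a, b, c} : Finset (ℝ × ℝ)) → ℝ × ℝ))
    (ht' : AffineIndependent ℝ ((↑) : ({a, b, c'} : Finset (ℝ × ℝ)) → ℝ × ℝ))
    (hca : c ≠ a) (hcb : c ≠ b) (hc'a : c' ≠ a) (hc'b : c' ≠ b)
    (hside : 0 < cross2 (b - a) (c - a) * cross2 (b - a) (c' - a)) :
    ∃ q : ℝ × ℝ, q ∈ openCell {a, b, c} ∧ q ∈ openCell {a, b, c'} := by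
  classical
  set u := b - a with hu
  set fc := cross2 u (c - a) with hfc
  set fc' := cross2 u (c' - a) with hfc'
  have hfc0 : fc ≠ 0 := fun h => by simp [h] at hside
  have hfc'0 : fc' ≠ 0 := fun h => by simp [h] at hside
  set D := |fc| with hD
  set D' := |fc'| with hD'
  have hD0 : 0 < D := abs_pos.2 hfc0
  have hD'0 : 0 < D' := abs_pos.2 hfc'0
  set v₀ := D⁻¹ • (c - a) - D'⁻¹ • (c' - a) with hv₀
  have hcrossv₀ : cross2 u v₀ = 0 := by
    have hexp : cross2 u v₀ = D⁻¹ * fc - D'⁻¹ * fc' := by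
      simp only [hv₀, hfc, hfc', cross2, Prod.smul_def, smul_eq_mul, Prod.fst_sub, Prod.snd_sub,
        Prod.smul_fst, Prod.smul_snd]
      ring
    rw [hexp]
    rcases mul_pos_iff.1 hside with ⟨h1, h2⟩ | ⟨h1, h2⟩
    · rw [hD, hD', abs_of_pos h1, abs_of_pos h2]
      field_simp
      ring
    · rw [hD, hD', abs_of_neg h1, abs_of_neg h2]
      field_simp
      ring
  have hune : u ≠ 0 := sub_ne_zero.2 (Ne.symm hab)
  obtain ⟨s₀, hs₀⟩ := cross2_eq_zero hune hcrossv₀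
  set δ := min (min (D / 8) (D' / 8)) (1 / (8 * (|s₀| + 1))) with hδdef
  have hδ0 : 0 < δ := by
    refine lt_min (lt_min (by positivity) (by positivity)) (by positivity)
  set β := δ / D with hβ
  set β' := δ / D' with hβ'
  set s := δ * s₀ with hs
  have hβ0 : 0 < β := by positivity
  have hβ'0 : 0 < β' := by positivity
  have hβle : β ≤ 1 / 8 := by
    rw [hβ, div_le_div_iff₀ hD0 (by norm_num)]
    have : δ ≤ D / 8 := le_trans (min_le_left _ _) (min_le_left _ _)
    linarith
  have hβ'le : β' ≤ 1 / 8 := by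
    rw [hβ', div_le_div_iff₀ hD'0 (by norm_num)]
    have : δ ≤ D' / 8 := le_trans (min_le_left _ _) (min_le_right _ _)
    linarith
  have hsle : |s| ≤ 1 / 8 := by
    rw [hs, abs_mul, abs_of_pos hδ0]
    have h1 : δ ≤ 1 / (8 * (|s₀| + 1)) := min_le_right _ _
    have h2 : (0:ℝ) < 8 * (|s₀| + 1) := by positivity
    calc δ * |s₀| ≤ (1 / (8 * (|s₀| + 1))) * |s₀| := by
          apply mul_le_mul_of_nonneg_right h1 (abs_nonneg _)
      _ ≤ 1 / 8 := by
          rw [div_mul_eq_mul_div, div_le_div_iff₀ h2 (by norm_num)]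
          have := abs_nonneg s₀
          nlinarith
  -- the common point
  have hkey : β • (c - a) = s • u + β' • (c' - a) := by
    have e1 : β • (c - a) = δ • (D⁻¹ • (c - a)) := by
      rw [smul_smul, hβ, div_eq_mul_inv]
    have e2 : D⁻¹ • (c - a) = v₀ + D'⁻¹ • (c' - a) := by rw [hv₀]; abel
    rw [e1, e2, smul_add, hs₀, smul_smul, ← hs, smul_smul, hβ', div_eq_mul_inv]
  set w : ℝ × ℝ → ℝ := fun y => if y = a then (1/2 : ℝ) - β else if y = b then (1/2 : ℝ) else β with hw
  set w' : ℝ × ℝ → ℝ :=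
    fun y => if y = a then (1/2 : ℝ) - s - β' else if y = b then (1/2 : ℝ) + s else β' with hw'
  obtain ⟨hsum1, hval1⟩ := triple_sum hab hca hcb _ _ _ w hw
  obtain ⟨hsum2, hval2⟩ := triple_sum hab hc'a hc'b _ _ _ w' hw'
  have habs' : ∀ x : ℝ, -|x| ≤ x ∧ x ≤ |x| := fun x => ⟨neg_abs_le x, le_abs_self x⟩
  obtain ⟨hs1, hs2⟩ := habs' s
  have wva : w a = (1/2 : ℝ) - β := by simp [hw]
  have wvb : w b = (1/2 : ℝ) := by simp [hw, Ne.symm hab]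
  have wvc : w c = β := by simp [hw, hca, hcb]
  have wva' : w' a = (1/2 : ℝ) - s - β' := by simp [hw']
  have wvb' : w' b = (1/2 : ℝ) + s := by simp [hw', Ne.symm hab]
  have wvc' : w' c' = β' := by simp [hw', hc'a, hc'b]
  have hwpos : ∀ y ∈ ({a, b, c} : Finset (ℝ × ℝ)), 0 < w y := by
    intro y hy
    simp only [Finset.mem_insert, Finset.mem_singleton] at hy
    rcases hy with h | h | h
    · rw [h, wva]; linarith
    · rw [h, wvb]; norm_num
    · rw [h, wvc]; linarith
  have hw'pos : ∀ y ∈ ({a, b, c'} : Finset (ℝ × ℝ)), 0 < w' y := by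
    intro y hy
    simp only [Finset.mem_insert, Finset.mem_singleton] at hy
    rcases hy with h | h | h
    · rw [h, wva']; linarith
    · rw [h, wvb']; linarith
    · rw [h, wvc']; linarith
  have hsumw : ∑ y ∈ ({a, b, c} : Finset (ℝ × ℝ)), w y = 1 := by rw [hsum1]; ring
  have hsumw' : ∑ y ∈ ({a, b, c'} : Finset (ℝ × ℝ)), w' y = 1 := by rw [hsum2]; ring
  have hmem1 := mem_openCell_of_pos_weights ht (subset_refl _) hwpos hsumw
  have hmem2 := mem_openCell_of_pos_weights ht' (subset_refl _) hw'pos hsumw'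
  refine ⟨∑ y ∈ ({a, b, c} : Finset (ℝ × ℝ)), w y • y, hmem1, ?_⟩
  have heq : ∑ y ∈ ({a, b, c} : Finset (ℝ × ℝ)), w y • y
      = ∑ y ∈ ({a, b, c'} : Finset (ℝ × ℝ)), w' y • y := by
    rw [hval1, hval2]
    have lhs : ((1/2 : ℝ) - β) • a + (1/2 : ℝ) • b + β • c = a + (1/2 : ℝ) • u + β • (c - a) := by
      rw [hu]; module
    have rhs : ((1/2 : ℝ) - s - β') • a + ((1/2 : ℝ) + s) • b + β' • c'
        = a + (1/2 : ℝ) • u + (s • u + β' • (c' - a)) := by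
      rw [hu]; module
    rw [lhs, rhs, hkey]
  rw [heq]
  exact hmem2

end Aux5

section Aux6

open StripTriangulation

/-- Open cells of nonempty faces are nonempty. -/
theorem openCell_nonempty {t c : Finset (ℝ × ℝ)}
    (ht : AffineIndependent ℝ ((↑) : t → ℝ × ℝ)) (hct : c ⊆ t) (hc : c ≠ ∅) :
    (openCell c).Nonempty := by
  have hcard : 0 < (c.card : ℝ) := by
    have := Finset.card_pos.2 (Finset.nonempty_of_ne_empty hc)
    exact_mod_cast this
  refine ⟨_, mem_openCell_of_pos_weights ht hct (w := fun _ => (c.card : ℝ)⁻¹)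
    (fun y _ => by positivity) ?_⟩
  rw [Finset.sum_const, nsmul_eq_mul, mul_inv_cancel₀ (ne_of_gt hcard)]

/-- A triangle containing two given distinct vertices is of the form `{a, b, x}`. -/
theorem triangle_eq_insert {t : Finset (ℝ × ℝ)} (hcard : t.card = 3) {a b : ℝ × ℝ}
    (ha : a ∈ t) (hb : b ∈ t) (hab : a ≠ b) :
    ∃ x, x ≠ a ∧ x ≠ b ∧ t = {a, b, x} := by
  classical
  have habs : ({a, b} : Finset (ℝ × ℝ)) ⊆ t := by
    intro y hy; simp only [Finset.mem_insert, Finset.mem_singleton] at hy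
    rcases hy with rfl | rfl <;> assumption
  have hc2 : ({a, b} : Finset (ℝ × ℝ)).card = 2 := by
    rw [Finset.card_insert_of_notMem (by simp [hab]), Finset.card_singleton]
  have hsd : (t \ {a, b}).card = 1 := by
    rw [Finset.card_sdiff_of_subset habs, hcard, hc2]
  obtain ⟨x, hx⟩ := Finset.card_eq_one.1 hsd
  have hxmem : x ∈ t \ ({a, b} : Finset (ℝ × ℝ)) := by rw [hx]; simp
  rw [Finset.mem_sdiff, Finset.mem_insert, Finset.mem_singleton] at hxmem
  push_neg at hxmem
  refine ⟨x, hxmem.2.1, hxmem.2.2, ?_⟩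
  have hsub : ({a, b, x} : Finset (ℝ × ℝ)) ⊆ t := by
    intro y hy; simp only [Finset.mem_insert, Finset.mem_singleton] at hy
    rcases hy with rfl | rfl | rfl
    exacts [ha, hb, hxmem.1]
  have hcard' : ({a, b, x} : Finset (ℝ × ℝ)).card = 3 := by
    rw [Finset.card_insert_of_notMem (by simp [hab, Ne.symm hxmem.2.1]),
      Finset.card_insert_of_notMem (by simp [Ne.symm hxmem.2.2]), Finset.card_singleton]
  exact (Finset.eq_of_subset_of_card_le hsub (by rw [hcard, hcard'])).symm

/-- Proper faces span proper affine subspaces. -/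
theorem affineSpan_face_ne_top {t b : Finset (ℝ × ℝ)}
    (ht : AffineIndependent ℝ ((↑) : t → ℝ × ℝ)) (hb : b ⊂ t) :
    affineSpan ℝ (b : Set (ℝ × ℝ)) ≠ ⊤ := by
  obtain ⟨x, hxt, hxb⟩ := Finset.exists_of_ssubset hb
  have hx : x ∉ affineSpan ℝ (b : Set (ℝ × ℝ)) := by
    intro hmem
    have hnot := ht.notMem_affineSpan_diff ⟨x, hxt⟩ Set.univ
    refine hnot ?_
    have hsub : (b : Set (ℝ × ℝ)) ⊆ (fun y : t => (y : ℝ × ℝ)) '' (Set.univ \ {⟨x, hxt⟩}) := by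
      intro y hy
      have hyt : y ∈ t := hb.subset (by exact_mod_cast hy)
      refine ⟨⟨y, hyt⟩, ⟨Set.mem_univ _, ?_⟩, rfl⟩
      simp only [Set.mem_singleton_iff]
      intro hcon
      apply hxb
      have : y = x := by exact congrArg Subtype.val hcon
      rwa [← this]
    exact affineSpan_mono ℝ hsub hmem
  intro hcon
  exact hx (hcon ▸ AffineSubspace.mem_top ℝ (ℝ × ℝ) x)

/-- Any neighbourhood of a point of the half strip contains a ball inside the strip. -/
theorem halfStrip_ball (q : ℝ × ℝ) (hq : q ∈ halfStrip) {ε : ℝ} (hε : 0 < ε) :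
    ∃ w : ℝ × ℝ, ∃ ρ : ℝ, 0 < ρ ∧
      Metric.ball w ρ ⊆ halfStrip ∧ Metric.ball w ρ ⊆ Metric.ball q ε := by
  obtain ⟨hx, hy0, hy1⟩ := hq
  set σ := min (ε / 4) (4⁻¹ : ℝ) with hσ
  have hσ0 : 0 < σ := lt_min (by positivity) (by norm_num)
  have hσε : σ ≤ ε / 4 := min_le_left _ _
  have hσ4 : σ ≤ 4⁻¹ := min_le_right _ _
  refine ⟨(q.1 + σ, q.2 * (1 - 2 * σ) + σ), σ, hσ0, ?_, ?_⟩
  · rintro ⟨x, y⟩ hxy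
    rw [Metric.mem_ball, Prod.dist_eq] at hxy
    simp only at hxy
    have h1 : dist x (q.1 + σ) < σ := lt_of_le_of_lt (le_max_left _ _) hxy
    have h2 : dist y (q.2 * (1 - 2 * σ) + σ) < σ := lt_of_le_of_lt (le_max_right _ _) hxy
    rw [Real.dist_eq, abs_lt] at h1 h2
    obtain ⟨h1l, h1r⟩ := h1
    obtain ⟨h2l, h2r⟩ := h2
    refine ⟨by simp only; linarith, by simp only; nlinarith, by simp only; nlinarith⟩
  · rintro ⟨x, y⟩ hxy
    rw [Metric.mem_ball, Prod.dist_eq, max_lt_iff] at hxy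
    simp only at hxy
    obtain ⟨h1, h2⟩ := hxy
    rw [Real.dist_eq, abs_lt] at h1 h2
    rw [Metric.mem_ball, Prod.dist_eq, max_lt_iff]
    simp only
    rw [Real.dist_eq, Real.dist_eq, abs_lt, abs_lt]
    obtain ⟨h1l, h1r⟩ := h1
    obtain ⟨h2l, h2r⟩ := h2
    constructor
    · constructor <;> nlinarith
    · constructor <;> nlinarith

end Aux6

section Aux7

open StripTriangulation MeasureTheory

variable (T : StripTriangulation)

/-- Near every point of the half strip there are points in open 2-cells. -/
theorem exists_point_in_open_two_cell {q : ℝ × ℝ} (hq : q ∈ halfStrip) {ε : ℝ} (hε : 0 < ε) :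
    ∃ q' : ℝ × ℝ, ∃ t ∈ T.tri, q' ∈ openCell t ∧ q' ∈ Metric.ball q ε ∧ q' ∈ halfStrip := by
  obtain ⟨w, ρ, hρ, hball1, hball2⟩ := halfStrip_ball q hq hε
  have hS : {t | t ∈ T.tri ∧ (convexHull ℝ (t : Set (ℝ × ℝ)) ∩
      Metric.closedBall w ρ).Nonempty}.Finite :=
    T.loc_finite _ (isCompact_closedBall w ρ)
  set bad : Set (ℝ × ℝ) := ⋃ t ∈ {t | t ∈ T.tri ∧ (convexHull ℝ (t : Set (ℝ × ℝ)) ∩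
      Metric.closedBall w ρ).Nonempty}, ⋃ b ∈ {b : Finset (ℝ × ℝ) | b ⊂ t},
      convexHull ℝ (b : Set (ℝ × ℝ)) with hbad
  have hbad0 : volume bad = 0 := by
    rw [hbad]
    refine (measure_biUnion_null_iff hS.countable).2 (fun t ht => ?_)
    have hfaces : {b : Finset (ℝ × ℝ) | b ⊂ t}.Finite :=
      Set.Finite.subset t.powerset.finite_toSet (fun b hb => by
        simpa using hb.subset)
    refine (measure_biUnion_null_iff hfaces.countable).2 (fun b hb => ?_)
    refine measure_mono_null ?_
      (Measure.addHaar_affineSubspace volume _ (affineSpan_face_ne_top (T.indep t ht.1) hb))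
    exact convexHull_subset_affineSpan _
  have hpos : 0 < volume (Metric.ball w ρ) := Metric.measure_ball_pos volume w hρ
  have hnot : ¬ Metric.ball w ρ ⊆ bad := fun hcon => by
    have := measure_mono_null hcon hbad0
    rw [this] at hpos; exact lt_irrefl _ hpos
  obtain ⟨q', hq'ball, hq'bad⟩ := Set.not_subset.1 hnot
  have hq'strip : q' ∈ halfStrip := hball1 hq'ball
  obtain ⟨U, hU⟩ := Set.mem_iUnion.1 (T.covers hq'strip)
  simp only [Set.mem_iUnion, exists_prop] at hU
  obtain ⟨ht₀, hq't₀⟩ := hU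
  have ht₀S : U ∈ T.tri ∧ (convexHull ℝ (U : Set (ℝ × ℝ)) ∩ Metric.closedBall w ρ).Nonempty :=
    ⟨ht₀, ⟨q', hq't₀, Metric.ball_subset_closedBall hq'ball⟩⟩
  refine ⟨q', U, ht₀, ⟨hq't₀, ?_⟩, hball2 hq'ball, hq'strip⟩
  simp only [Set.mem_iUnion, not_exists]
  intro b hb hq'b
  refine hq'bad ?_
  rw [hbad]
  refine Set.mem_biUnion ht₀S (Set.mem_biUnion hb hq'b)

/-- Every point of the half strip close enough to `p` lies in a triangle containing `p`. -/
theorem near_point_triangles (p : ℝ × ℝ) :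
    ∃ δ : ℝ, 0 < δ ∧ ∀ q ∈ halfStrip, dist q p < δ →
      ∃ t ∈ T.tri, p ∈ convexHull ℝ (t : Set (ℝ × ℝ)) ∧ q ∈ convexHull ℝ (t : Set (ℝ × ℝ)) := by
  classical
  have hS : {t | t ∈ T.tri ∧ (convexHull ℝ (t : Set (ℝ × ℝ)) ∩
      Metric.closedBall p 1).Nonempty}.Finite :=
    T.loc_finite _ (isCompact_closedBall p 1)
  set S' := {t | (t ∈ T.tri ∧ (convexHull ℝ (t : Set (ℝ × ℝ)) ∩
      Metric.closedBall p 1).Nonempty) ∧ p ∉ convexHull ℝ (t : Set (ℝ × ℝ))} with hS'def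
  have hS' : S'.Finite := hS.subset (fun t ht => ht.1)
  have hinf : ∀ t ∈ S', 0 < Metric.infDist p (convexHull ℝ (t : Set (ℝ × ℝ))) := by
    intro t ht
    have hcl : IsClosed (convexHull ℝ (t : Set (ℝ × ℝ))) :=
      (t.finite_toSet.isCompact_convexHull ℝ).isClosed
    have hne : (convexHull ℝ (t : Set (ℝ × ℝ))).Nonempty := by
      have h3 := T.card_eq t ht.1.1
      have : t.Nonempty := Finset.card_pos.1 (by rw [h3]; norm_num)
      exact ⟨this.choose, subset_convexHull ℝ _ this.choose_spec⟩
    exact (hcl.notMem_iff_infDist_pos hne).1 ht.2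
  set F := hS'.toFinset with hF
  by_cases hFne : F.Nonempty
  · set δ := min 1 (F.inf' hFne (fun t => Metric.infDist p (convexHull ℝ (t : Set (ℝ × ℝ)))))
      with hδdef
    have hδ0 : 0 < δ := by
      refine lt_min one_pos ?_
      rw [Finset.lt_inf'_iff]
      intro t ht
      exact hinf t (hS'.mem_toFinset.1 ht)
    refine ⟨δ, hδ0, fun q hqstrip hqd => ?_⟩
    obtain ⟨U, hU⟩ := Set.mem_iUnion.1 (T.covers hqstrip)
    simp only [Set.mem_iUnion, exists_prop] at hU
    obtain ⟨ht, hqt⟩ := hU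
    have htS : U ∈ T.tri ∧ (convexHull ℝ (U : Set (ℝ × ℝ)) ∩ Metric.closedBall p 1).Nonempty := by
      refine ⟨ht, ⟨q, hqt, ?_⟩⟩
      rw [Metric.mem_closedBall]
      have : δ ≤ 1 := min_le_left _ _
      linarith [hqd]
    by_cases hp : p ∈ convexHull ℝ (U : Set (ℝ × ℝ))
    · exact ⟨U, ht, hp, hqt⟩
    · exfalso
      have htS' : U ∈ S' := ⟨htS, hp⟩
      have h1 : Metric.infDist p (convexHull ℝ (U : Set (ℝ × ℝ))) ≤ dist p q :=
        Metric.infDist_le_dist_of_mem hqt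
      have h2 : δ ≤ Metric.infDist p (convexHull ℝ (U : Set (ℝ × ℝ))) :=
        le_trans (min_le_right _ _) (Finset.inf'_le _ (hS'.mem_toFinset.2 htS'))
      rw [dist_comm] at h1
      linarith
  · refine ⟨1, one_pos, fun q hqstrip hqd => ?_⟩
    obtain ⟨U, hU⟩ := Set.mem_iUnion.1 (T.covers hqstrip)
    simp only [Set.mem_iUnion, exists_prop] at hU
    obtain ⟨ht, hqt⟩ := hU
    by_cases hp : p ∈ convexHull ℝ (U : Set (ℝ × ℝ))
    · exact ⟨U, ht, hp, hqt⟩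
    · exfalso
      refine hFne ⟨U, hS'.mem_toFinset.2 ⟨⟨ht, ⟨q, hqt, ?_⟩⟩, hp⟩⟩
      rw [Metric.mem_closedBall]
      linarith [hqd]

end Aux7

section Aux8

open StripTriangulation

variable (T : StripTriangulation)

theorem cellUnion_subset_halfStrip {E : Set (ℝ × ℝ)} (hE : T.IsCellUnion E) : E ⊆ halfStrip := by
  obtain ⟨𝒞, h𝒞, rfl⟩ := hE
  refine Set.iUnion₂_subset fun c hc => ?_
  obtain ⟨-, t, htT, hct⟩ := h𝒞 c hc
  refine subset_trans (fun q hq => hq.1) ?_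
  exact subset_trans (convexHull_mono (by exact_mod_cast hct)) (T.subset_strip t htT)

theorem edgeUnion_subset_halfStrip {B : Set (ℝ × ℝ)} (hB : T.IsEdgeUnion B) : B ⊆ halfStrip := by
  obtain ⟨𝒟, h𝒟, rfl⟩ := hB
  refine Set.iUnion₂_subset fun c hc => ?_
  obtain ⟨-, -, t, htT, hct⟩ := h𝒟 c hc
  exact subset_trans (convexHull_mono (by exact_mod_cast hct)) (T.subset_strip t htT)

/-- The midpoint of an edge lies in the open cell of the edge. -/
theorem midpoint_mem_openCell_edge {a b : ℝ × ℝ} (hedge : T.IsEdge a b) :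
    ((1/2 : ℝ) • a + (1/2 : ℝ) • b) ∈ openCell {a, b} := by
  classical
  obtain ⟨hab, t, htT, hat, hbt⟩ := hedge
  have habt : ({a, b} : Finset (ℝ × ℝ)) ⊆ t := by
    intro y hy; simp only [Finset.mem_insert, Finset.mem_singleton] at hy
    rcases hy with rfl | rfl <;> assumption
  have := mem_openCell_of_pos_weights (T.indep t htT) habt
    (w := fun _ => (1/2 : ℝ)) (fun y _ => by norm_num) (by rw [Finset.sum_pair hab]; norm_num)
  rwa [Finset.sum_pair hab] at this

/-- Any triangle whose hull contains the midpoint of an edge contains both endpoints. -/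
theorem triangle_contains_edge {a b : ℝ × ℝ} (hedge : T.IsEdge a b) {t : Finset (ℝ × ℝ)}
    (htT : t ∈ T.tri) (hp : ((1/2 : ℝ) • a + (1/2 : ℝ) • b) ∈ convexHull ℝ (t : Set (ℝ × ℝ))) :
    a ∈ t ∧ b ∈ t := by
  obtain ⟨hab, t₀, ht₀T, hat₀, hbt₀⟩ := hedge
  have habt₀ : ({a, b} : Finset (ℝ × ℝ)) ⊆ t₀ := by
    intro y hy; simp only [Finset.mem_insert, Finset.mem_singleton] at hy
    rcases hy with rfl | rfl <;> assumption
  have hcell := midpoint_mem_openCell_edge T ⟨hab, t₀, ht₀T, hat₀, hbt₀⟩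
  have hp₀ : ((1/2 : ℝ) • a + (1/2 : ℝ) • b) ∈ convexHull ℝ ((t₀ : Finset (ℝ × ℝ)) :
      Set (ℝ × ℝ)) := convexHull_mono (by exact_mod_cast habt₀) hcell.1
  have hmeet := T.faces_meet t htT t₀ ht₀T
  have hpi : ((1/2 : ℝ) • a + (1/2 : ℝ) • b) ∈
      convexHull ℝ ((t ∩ t₀ : Finset (ℝ × ℝ)) : Set (ℝ × ℝ)) := by
    rw [← hmeet]; exact ⟨hp, hp₀⟩
  have hsub : ({a, b} : Finset (ℝ × ℝ)) ⊆ t ∩ t₀ :=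
    face_subset_of_mem_openCell (T.indep t₀ ht₀T) habt₀
      (Finset.inter_subset_right) hcell hpi
  have h2 := hsub.trans Finset.inter_subset_left
  exact ⟨h2 (by simp), h2 (by simp)⟩

/-- At every point of the boundary `B` of a disk pair there is a whole triangle cell
inside `E` whose closure contains the point. -/
theorem exists_triangle_cell_in_E {E B : Set (ℝ × ℝ)} (hdp : T.IsDiskPair E B) {p : ℝ × ℝ}
    (hpB : p ∈ B) : ∃ t ∈ T.tri, p ∈ convexHull ℝ (t : Set (ℝ × ℝ)) ∧ openCell t ⊆ E := by
  obtain ⟨hcell, hedgeu, hdisj, hopen, hclosed, hfront, hhomeo, hcase⟩ := hdp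
  have hBstrip : B ⊆ halfStrip := edgeUnion_subset_halfStrip T hedgeu
  have hEstrip : E ⊆ halfStrip := cellUnion_subset_halfStrip T hcell
  have hpstrip : p ∈ halfStrip := hBstrip hpB
  have hpcl : p ∈ closure E := by
    have h1 : (⟨p, hpstrip⟩ : halfStrip) ∈ frontier (Subtype.val ⁻¹' E : Set halfStrip) := by
      rw [← hfront]; exact hpB
    have h2 : (⟨p, hpstrip⟩ : halfStrip) ∈ closure (Subtype.val ⁻¹' E : Set halfStrip) :=
      frontier_subset_closure h1
    have h3 := (continuous_subtype_val.closure_preimage_subset E) h2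
    exact h3
  obtain ⟨δ, hδ0, hδ⟩ := near_point_triangles T p
  obtain ⟨q, hqE, hpq⟩ := Metric.mem_closure_iff.1 hpcl (δ/2) (by positivity)
  have hqstrip : q ∈ halfStrip := hEstrip hqE
  obtain ⟨ε, hε0, hball⟩ := Metric.isOpen_iff.1 hopen ⟨q, hqstrip⟩ hqE
  set ε' := min ε (δ/2) with hε'def
  have hε'0 : 0 < ε' := lt_min hε0 (by positivity)
  obtain ⟨q', t₁, ht₁T, hq'cell, hq'ball, hq'strip⟩ :=
    exists_point_in_open_two_cell T hqstrip hε'0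
  have hq'E : q' ∈ E := by
    have : (⟨q', hq'strip⟩ : halfStrip) ∈ Metric.ball (⟨q, hqstrip⟩ : halfStrip) ε := by
      rw [Metric.mem_ball, Subtype.dist_eq]
      exact lt_of_lt_of_le (Metric.mem_ball.1 hq'ball) (min_le_left _ _)
    exact hball this
  have hq'p : dist q' p < δ := by
    have h1 : dist q' q < δ/2 := lt_of_lt_of_le (Metric.mem_ball.1 hq'ball) (min_le_right _ _)
    have h2 := dist_triangle q' q p
    rw [dist_comm p q] at hpq
    linarith
  obtain ⟨t₂, ht₂T, hpt₂, hq't₂⟩ := hδ q' hq'strip hq'p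
  have ht₁₂ : t₁ = t₂ := by
    have hmeet := T.faces_meet t₁ ht₁T t₂ ht₂T
    have hq'i : q' ∈ convexHull ℝ ((t₁ ∩ t₂ : Finset (ℝ × ℝ)) : Set (ℝ × ℝ)) := by
      rw [← hmeet]; exact ⟨hq'cell.1, hq't₂⟩
    have hsub : t₁ ⊆ t₁ ∩ t₂ :=
      face_subset_of_mem_openCell (T.indep t₁ ht₁T) (subset_refl _)
        (Finset.inter_subset_left) hq'cell hq'i
    have hsub' : t₁ ⊆ t₂ := hsub.trans Finset.inter_subset_right
    refine Finset.eq_of_subset_of_card_le hsub' ?_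
    rw [T.card_eq t₁ ht₁T, T.card_eq t₂ ht₂T]
  refine ⟨t₁, ht₁T, by rw [ht₁₂]; exact hpt₂, ?_⟩
  exact openCell_subset_of_cellUnion T hcell ht₁T (subset_refl _) hq'cell hq'E

end Aux8

section Aux9

open StripTriangulation

variable (T : StripTriangulation)

/-- An edge of the strip lies on the boundary of at most two of the disk pairs. -/
theorem edge_in_at_most_two {J : Type} (E B : J → Set (ℝ × ℝ))
    (hdp : ∀ j, T.IsDiskPair (E j) (B j))
    (hdisj : Pairwise fun j j' => Disjoint (E j) (E j')) {a b : ℝ × ℝ}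
    (hedge : T.IsEdge a b) :
    {j | segment ℝ a b ⊆ B j}.Finite ∧ {j | segment ℝ a b ⊆ B j}.ncard ≤ 2 := by
  classical
  set S := {j | segment ℝ a b ⊆ B j} with hSdef
  have hp_seg : ((1/2 : ℝ) • a + (1/2 : ℝ) • b) ∈ segment ℝ a b :=
    ⟨1/2, 1/2, by norm_num, by norm_num, by norm_num, rfl⟩
  have key : ∀ j : S, ∃ c : ℝ × ℝ, c ≠ a ∧ c ≠ b ∧
      ({a, b, c} : Finset (ℝ × ℝ)) ∈ T.tri ∧ openCell ({a, b, c} : Finset (ℝ × ℝ)) ⊆ E j := by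
    rintro ⟨j, hj⟩
    obtain ⟨t, htT, hpt, hsub⟩ := exists_triangle_cell_in_E T (hdp j) (hj hp_seg)
    obtain ⟨hat, hbt⟩ := triangle_contains_edge T hedge htT hpt
    obtain ⟨c, hca, hcb, htEq⟩ := triangle_eq_insert (T.card_eq t htT) hat hbt hedge.1
    exact ⟨c, hca, hcb, htEq ▸ htT, htEq ▸ hsub⟩
  choose c hca hcb htri hsubE using key
  set f : S → Bool := fun j => decide (0 < cross2 (b - a) (c j - a)) with hfdef
  have hmema : ∀ j : S, a ∈ ({a, b, c j} : Finset (ℝ × ℝ)) := fun j => by simp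
  have hmemb : ∀ j : S, b ∈ ({a, b, c j} : Finset (ℝ × ℝ)) := fun j => by simp
  have hmemc : ∀ j : S, c j ∈ ({a, b, c j} : Finset (ℝ × ℝ)) := fun j => by simp
  have hfinj : Function.Injective f := by
    intro j j' hf
    by_contra hne
    have hjj' : (j : J) ≠ (j' : J) := fun h => hne (Subtype.ext h)
    have hdisjE := hdisj hjj'
    by_cases hcc : c j = c j'
    · obtain ⟨q, hq⟩ := openCell_nonempty (T.indep _ (htri j)) (subset_refl _)
        (by simp : ({a, b, c j} : Finset (ℝ × ℝ)) ≠ ∅)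
      refine Set.disjoint_left.1 hdisjE (hsubE j hq) (hsubE j' ?_)
      rw [← hcc]; exact hq
    · have h1 : cross2 (b - a) (c j - a) ≠ 0 :=
        cross2_ne_zero_of_indep (T.indep _ (htri j)) (hmema j) (hmemb j) (hmemc j)
          hedge.1 (hca j) (hcb j)
      have h2 : cross2 (b - a) (c j' - a) ≠ 0 :=
        cross2_ne_zero_of_indep (T.indep _ (htri j')) (hmema j') (hmemb j') (hmemc j')
          hedge.1 (hca j') (hcb j')
      have hiff : (0 < cross2 (b - a) (c j - a)) ↔ (0 < cross2 (b - a) (c j' - a)) := by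
        have := hf
        rw [hfdef] at this
        simpa [decide_eq_decide] using this
      have hprod : 0 < cross2 (b - a) (c j - a) * cross2 (b - a) (c j' - a) := by
        rcases lt_trichotomy (cross2 (b - a) (c j - a)) 0 with hlt | heq | hgt
        · have : ¬ (0 < cross2 (b - a) (c j' - a)) := fun hcon => by
            have := hiff.2 hcon; linarith
          have hlt' : cross2 (b - a) (c j' - a) < 0 :=
            lt_of_le_of_ne (not_lt.1 this) h2
          exact mul_pos_of_neg_of_neg hlt hlt'
        · exact absurd heq h1
        · exact mul_pos hgt (hiff.1 hgt)
      obtain ⟨q, hq1, hq2⟩ := same_side_overlap hedge.1 (T.indep _ (htri j))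
        (T.indep _ (htri j')) (hca j) (hcb j) (hca j') (hcb j') hprod
      exact Set.disjoint_left.1 hdisjE (hsubE j hq1) (hsubE j' hq2)
  have hfin : Finite S := Finite.of_injective f hfinj
  refine ⟨Set.toFinite S, ?_⟩
  have h1 : S.ncard = Nat.card S := (Nat.card_coe_set_eq S).symm
  rw [h1]
  have h2 : Nat.card S ≤ Nat.card Bool := Nat.card_le_card_of_injective f hfinj
  simpa using h2

end Aux9

section Aux10

open StripTriangulation

variable (T : StripTriangulation)

theorem halfStrip_isClosed : IsClosed halfStrip := by
  have : halfStrip = {p : ℝ × ℝ | 0 ≤ p.1} ∩ ({p : ℝ × ℝ | 0 ≤ p.2} ∩ {p : ℝ × ℝ | p.2 ≤ 1}) := by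
    ext p; simp [halfStrip, and_assoc]
  rw [this]
  exact (isClosed_le continuous_const continuous_fst).inter
    ((isClosed_le continuous_const continuous_snd).inter
      (isClosed_le continuous_snd continuous_const))

/-- The boundary of a disk pair is closed in the plane. -/
theorem isClosed_B {E B : Set (ℝ × ℝ)} (hdp : T.IsDiskPair E B) : IsClosed B := by
  obtain ⟨hcell, hedgeu, hdisj, hopen, hclosed, hfront, hhomeo, hcase⟩ := hdp
  have hBs : B ⊆ halfStrip := edgeUnion_subset_halfStrip T hedgeu
  have h1 : IsClosed (Subtype.val ⁻¹' B : Set halfStrip) := by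
    rw [hfront]; exact isClosed_frontier
  have h2 : IsClosed (Subtype.val '' (Subtype.val ⁻¹' B : Set halfStrip)) :=
    (halfStrip_isClosed).isClosedMap_subtype_val _ h1
  have h3 : Subtype.val '' (Subtype.val ⁻¹' B : Set halfStrip) = halfStrip ∩ B :=
    Subtype.image_preimage_coe halfStrip B
  rw [h3] at h2
  rwa [Set.inter_eq_self_of_subset_right hBs] at h2

/-- The boundary of a disk pair is nonempty. -/
theorem B_nonempty {E B : Set (ℝ × ℝ)} (hdp : T.IsDiskPair E B) : B.Nonempty := by
  obtain ⟨-, -, -, -, -, -, -, hcase⟩ := hdp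
  rcases hcase with ⟨⟨e⟩, -⟩ | ⟨⟨e⟩, -⟩
  · exact ⟨e.symm 1, (e.symm 1).2⟩
  · exact ⟨e.symm 0, (e.symm 0).2⟩

/-- If every vertex of `B` lies in a finite set `F`, then `B ⊆ convexHull F`. -/
theorem B_subset_hull {B : Set (ℝ × ℝ)} (hB : T.IsEdgeUnion B) {F : Set (ℝ × ℝ)}
    (hvert : ∀ v ∈ T.vert, v ∈ B → v ∈ F) : B ⊆ convexHull ℝ F := by
  obtain ⟨𝒟, h𝒟, rfl⟩ := hB
  refine Set.iUnion₂_subset fun c hc => ?_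
  obtain ⟨-, -, t, htT, hct⟩ := h𝒟 c hc
  refine convexHull_mono ?_
  intro v hv
  have hvB : v ∈ ⋃ c ∈ 𝒟, convexHull ℝ (c : Set (ℝ × ℝ)) :=
    Set.mem_biUnion hc (subset_convexHull ℝ _ hv)
  have hvvert : v ∈ T.vert := Set.mem_biUnion htT (hct hv)
  exact hvert v hvvert hvB

/-- Only finitely many disk-pair boundaries meet a given compact set. -/
theorem finitely_many_B_meet {J : Type} (E B : J → Set (ℝ × ℝ))
    (hdp : ∀ j, T.IsDiskPair (E j) (B j))
    (hdisj : Pairwise fun j j' => Disjoint (E j) (E j')) {K : Set (ℝ × ℝ)}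
    (hK : IsCompact K) : {j | (B j ∩ K).Nonempty}.Finite := by
  classical
  set S := {j | (B j ∩ K).Nonempty} with hSdef
  have key : ∀ j : S, ∃ t : Finset (ℝ × ℝ), t ∈ T.tri ∧
      (convexHull ℝ (t : Set (ℝ × ℝ)) ∩ K).Nonempty ∧ openCell t ⊆ E j := by
    rintro ⟨j, hj⟩
    obtain ⟨p, hpB, hpK⟩ := hj
    obtain ⟨t, htT, hpt, hsub⟩ := exists_triangle_cell_in_E T (hdp j) hpB
    exact ⟨t, htT, ⟨p, hpt, hpK⟩, hsub⟩
  choose t ht1 ht2 ht3 using key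
  have hfin : {u | u ∈ T.tri ∧ (convexHull ℝ (u : Set (ℝ × ℝ)) ∩ K).Nonempty}.Finite :=
    T.loc_finite K hK
  have hinj : Function.Injective t := by
    intro j j' hEq
    by_contra hne
    have hjj' : (j : J) ≠ (j' : J) := fun h => hne (Subtype.ext h)
    obtain ⟨q, hq⟩ := openCell_nonempty (T.indep _ (ht1 j)) (subset_refl _)
      (by
        intro hcon
        have := T.card_eq _ (ht1 j)
        rw [hcon] at this
        simp at this)
    exact Set.disjoint_left.1 (hdisj hjj') (ht3 j hq) (ht3 j' (by rw [← hEq]; exact hq))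
  haveI := hfin.to_subtype
  have : Finite S := Finite.of_injective (fun j => (⟨t j, ht1 j, ht2 j⟩ :
    {u | u ∈ T.tri ∧ (convexHull ℝ (u : Set (ℝ × ℝ)) ∩ K).Nonempty}))
    (by
      intro j j' h
      exact hinj (by simpa using congrArg Subtype.val h))
  exact Set.toFinite S

end Aux10

section Aux11

open StripTriangulation Bornology

variable (T : StripTriangulation)

/-- A disk pair with bounded boundary is a finite disk pair. -/
theorem circle_of_bounded_boundary {E B : Set (ℝ × ℝ)} (hdp : T.IsDiskPair E B)
    (hBb : IsBounded B) : Nonempty (B ≃ₜ Circle) ∧ IsBounded E := by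
  have hBclosed : IsClosed B := isClosed_B T hdp
  have hBcompact : IsCompact B := Metric.isCompact_of_isClosed_isBounded hBclosed hBb
  obtain ⟨hcell, hedgeu, hdisj, hopen, hclosed, hfront, hhomeo, hcase⟩ := hdp
  rcases hcase with ⟨hcirc, ⟨e⟩⟩ | ⟨⟨e⟩, -⟩
  · refine ⟨hcirc, ?_⟩
    haveI : CompactSpace (Metric.closedBall (0 : ℝ × ℝ) 1) :=
      isCompact_iff_compactSpace.1 (isCompact_closedBall _ _)
    haveI := e.symm.compactSpace
    have hcomp : IsCompact (E ∪ B) := isCompact_iff_compactSpace.2 inferInstance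
    exact hcomp.isBounded.subset Set.subset_union_left
  · exfalso
    haveI : CompactSpace B := isCompact_iff_compactSpace.1 hBcompact
    haveI := e.compactSpace
    exact noncompact_univ ℝ isCompact_univ

end Aux11
/-! ### Statement 16 -/

/-- **Remark.**  Let `{(E j, B j)}` be disk pairs as in the conclusion of the excision
theorem.  Then (a) every edge of the half strip is an edge of `B j` for at most two
indices `j`, and only finitely many `B j` have an edge in any finite (= compact)
subcomplex; and (b) if `Z i` is a finite subcomplex, then every `B j` mapped by `M` into
`Z i` is an edge-path loop (a circle, with `E j` bounded), and `M` maps only finitely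
many of the `B j` into `Z i`. -/
theorem disk_pair_boundary_facts {V : Type} (Ex : ExcisionSetup V) (M : StripMap Ex)
    (J : Type) (E : J → Set (ℝ × ℝ)) (B : J → Set (ℝ × ℝ)) (idx : J → ℕ)
    (hdp : ∀ j, M.T.IsDiskPair (E j) (B j))
    (hdisj : Pairwise fun j j' => Disjoint (E j) (E j'))
    (hBZ : ∀ j, ∀ v ∈ M.T.vert, v ∈ B j → M.m v ∈ Ex.Z (idx j))
    (hY : ∀ t ∈ M.T.tri, ∀ c : Finset (ℝ × ℝ), c ⊆ t → c ≠ ∅ →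
      (StripTriangulation.openCell c ∩ ⋃ j, E j) = ∅ → ∀ v ∈ c, M.m v ∈ Ex.Y) :
    -- (a)
    ((∀ a b : ℝ × ℝ, M.T.IsEdge a b → {j | segment ℝ a b ⊆ B j}.Finite ∧
        {j | segment ℝ a b ⊆ B j}.ncard ≤ 2) ∧
      (∀ K : Set (ℝ × ℝ), IsCompact K →
        {j | ∃ a b : ℝ × ℝ, M.T.IsEdge a b ∧ segment ℝ a b ⊆ B j ∧
          segment ℝ a b ⊆ K}.Finite)) ∧
    -- (b)
    (∀ i : ℕ, (Ex.Z i).Finite →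
      (∀ j, (∀ v ∈ M.T.vert, v ∈ B j → M.m v ∈ Ex.Z i) →
        Nonempty (B j ≃ₜ Circle) ∧ Bornology.IsBounded (E j)) ∧
      {j | ∀ v ∈ M.T.vert, v ∈ B j → M.m v ∈ Ex.Z i}.Finite) := by
  constructor
  · constructor
    · intro a b hedge
      exact edge_in_at_most_two M.T E B hdp hdisj hedge
    · intro K hK
      refine (finitely_many_B_meet M.T E B hdp hdisj hK).subset ?_
      rintro j ⟨a, b, hedge, hsegB, hsegK⟩
      exact ⟨a, hsegB (left_mem_segment ℝ a b), hsegK (left_mem_segment ℝ a b)⟩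
  · intro i hZ
    have hF : {v | v ∈ M.T.vert ∧ M.m v ∈ Ex.Z i}.Finite := M.proper (Ex.Z i) hZ
    constructor
    · intro j hj
      have hvert : ∀ v ∈ M.T.vert, v ∈ B j → v ∈ {v | v ∈ M.T.vert ∧ M.m v ∈ Ex.Z i} :=
        fun v hv hvB => ⟨hv, hj v hv hvB⟩
      have hhull := B_subset_hull M.T (hdp j).2.1 hvert
      have hBb : Bornology.IsBounded (B j) :=
        ((isBounded_convexHull).2 hF.isBounded).subset hhull
      exact circle_of_bounded_boundary M.T (hdp j) hBb
    · have hK : IsCompact (convexHull ℝ {v | v ∈ M.T.vert ∧ M.m v ∈ Ex.Z i}) :=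
        hF.isCompact_convexHull ℝ
      refine (finitely_many_B_meet M.T E B hdp hdisj hK).subset ?_
      intro j hj
      obtain ⟨x, hx⟩ := B_nonempty M.T (hdp j)
      have hvert : ∀ v ∈ M.T.vert, v ∈ B j → v ∈ {v | v ∈ M.T.vert ∧ M.m v ∈ Ex.Z i} :=
        fun v hv hvB => ⟨hv, hj v hv hvB⟩
      exact ⟨x, hx, B_subset_hull M.T (hdp j).2.1 hvert hx⟩
end
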